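/- If L ⊆ Γ^∞ is strongly recognized by a surjective homomorphism h : Γ* → M with M ∈ DA, then L is clopen in the strict alphabetic topology. -/

import Mathlib

namespace InfWords

variable {Γ : Type}

/-- Finite and infinite words over `Γ`: `Γ^∞ = Γ* ∪ Γ^ω`. -/
abbrev Word (Γ : Type) := List Γ ⊕ (ℕ → Γ)

/-- Prepend a finite word to a finite or infinite word. -/
def wappend (u : List Γ) : Word Γ → Word Γ
  | Sum.inl v => Sum.inl (u ++ v)
  | Sum.inr f => Sum.inr fun n => if h : n < u.length then u.get ⟨n, h⟩ else f (n - u.length)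

/-- The set of finite words `Γ*` inside `Γ^∞`. -/
def finWords (Γ : Type) : Set (Word Γ) := Set.range Sum.inl

/-- The set of infinite words `Γ^ω` inside `Γ^∞`. -/
def infWords (Γ : Type) : Set (Word Γ) := Set.range Sum.inr

/-- The alphabet of a word: the letters occurring in it. -/
def alph : Word Γ → Set Γ
  | Sum.inl u => {a | a ∈ u}
  | Sum.inr f => {a | ∃ n, f n = a}

/-- The imaginary part: letters occurring infinitely often. -/
def im : Word Γ → Set Γ
  | Sum.inl _ => ∅
  | Sum.inr f => {a | ∀ n, ∃ m, n ≤ m ∧ f m = a}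

/-- `A^∞`: words all of whose letters lie in `A`. -/
def infin (A : Set Γ) : Set (Word Γ) := {α | alph α ⊆ A}

/-- The basic set `u A^∞` of the alphabetic topology. -/
def cone (u : List Γ) (A : Set Γ) : Set (Word Γ) := wappend u '' infin A

/-- The alphabetic topology on `Γ^∞`, generated by the sets `u A^∞`. -/
instance alphTop : TopologicalSpace (Word Γ) :=
  TopologicalSpace.generateFrom {S | ∃ u A, S = cone u A}

/-- `cpx A`: words with `alph = im = A`. -/
def cpx (A : Set Γ) : Set (Word Γ) := {β | alph β = A ∧ im β = A}

/-- The strict alphabetic topology, generated by the sets `u · cpx A`. -/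
def strictTopo (Γ : Type) : TopologicalSpace (Word Γ) :=
  TopologicalSpace.generateFrom {S | ∃ u A, S = wappend u '' cpx A}

/-- `u` is a finite prefix of the word `α`. -/
def IsPre (u : List Γ) : Word Γ → Prop
  | Sum.inl v => u <+: v
  | Sum.inr f => ∀ i : Fin u.length, u.get i = f i.1

/-- The arrow language `→W`: every prefix extends to a prefix lying in `W`. -/
def arrow (W : Set (List Γ)) : Set (Word Γ) :=
  {α | ∀ u, IsPre u α → ∃ v, IsPre (u ++ v) α ∧ u ++ v ∈ W}

/-- The right quotient `L / A^∞`. -/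
def quotInf (L : Set (Word Γ)) (A : Set Γ) : Set (List Γ) :=
  {u | ∃ β ∈ infin A, wappend u β ∈ L}

/-- `A^im`: words whose set of letters occurring infinitely often is exactly `A`. -/
def imSet (A : Set Γ) : Set (Word Γ) := {α | im α = A}

/-- `z^ω`, with the convention `1^ω = 1`. -/
def omegaPow : List Γ → Word Γ
  | [] => Sum.inl []
  | a :: l => Sum.inr fun n => (a :: l).get ⟨n % (a :: l).length, Nat.mod_lt n (Nat.succ_pos _)⟩

/-- The partial products `u v₀ v₁ ⋯ v_{n-1}`. -/
def partialProd (u : List Γ) (v : ℕ → List Γ) (n : ℕ) : List Γ :=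
  u ++ ((List.range n).map v).flatten

/-- `α` is the (finite or infinite) product `u v₀ v₁ v₂ ⋯`, with convention `1^ω = 1`. -/
def IsInfProd (u : List Γ) (v : ℕ → List Γ) : Word Γ → Prop
  | Sum.inl w => (∀ n, partialProd u v n <+: w) ∧ ∃ n, partialProd u v n = w
  | Sum.inr f => (∀ n, IsPre (partialProd u v n) (Sum.inr f)) ∧
      ∀ k, ∃ n, k < (partialProd u v n).length

/-- `h : Γ* → M` is a monoid homomorphism. -/
structure IsHom {M : Type} [Monoid M] (h : List Γ → M) : Prop where
  map_one : h [] = 1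
  map_mul : ∀ u v, h (u ++ v) = h u * h v

/-- `[s][e]^ω`: products `u v₀ v₁ ⋯` with `h u = s` and `h vᵢ = e`. -/
def pairSet {M : Type} (h : List Γ → M) (s e : M) : Set (Word Γ) :=
  {α | ∃ u v, h u = s ∧ (∀ i, h (v i) = e) ∧ IsInfProd u v α}

/-- `(s, e)` is a linked pair. -/
def LinkedPair {M : Type} [Monoid M] (s e : M) : Prop := s * e = s ∧ e * e = e

/-- `h` strongly recognizes `L`. -/
def StronglyRecognizes {M : Type} [Monoid M] (h : List Γ → M) (L : Set (Word Γ)) : Prop :=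
  L = ⋃ (s : M) (e : M) (_ : LinkedPair s e ∧ (pairSet h s e ∩ L).Nonempty), pairSet h s e

/-- `L` is regular: strongly recognized by a surjective homomorphism onto a finite monoid. -/
def Regular (L : Set (Word Γ)) : Prop :=
  ∃ (M : Type) (i : Monoid M), Finite M ∧
    ∃ h : List Γ → M, @IsHom Γ M i h ∧ Function.Surjective h ∧ @StronglyRecognizes Γ M i h L

/-- `L` is deterministic. -/
def Deterministic (L : Set (Word Γ)) : Prop :=
  Regular L ∧ ∃ W : Set (List Γ), L ∩ infWords Γ = arrow W ∩ infWords Γ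

/-- The syntactic preorder `u ≤_L v`. -/
def synLe (L : Set (Word Γ)) (u v : List Γ) : Prop :=
  ∀ x y z : List Γ,
    (wappend (x ++ v ++ y) (omegaPow z) ∈ L → wappend (x ++ u ++ y) (omegaPow z) ∈ L) ∧
    (wappend x (omegaPow (v ++ y)) ∈ L → wappend x (omegaPow (u ++ y)) ∈ L)

/-- The syntactic congruence `u ≡_L v`. -/
def synEq (L : Set (Word Γ)) (u v : List Γ) : Prop := synLe L u v ∧ synLe L v u

/-- `[s][e]^ω` for syntactic classes represented by words `s`, `e`. -/
def pairSetSyn (L : Set (Word Γ)) (s e : List Γ) : Set (Word Γ) :=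
  {α | ∃ u v, synEq L u s ∧ (∀ i, synEq L (v i) e) ∧ IsInfProd u v α}

/-- `s` represents an element of `M_e` in the syntactic monoid of `L`:
`s` is a product of words each of which is a factor of (something equivalent to) `e`. -/
def InMe (L : Set (Word Γ)) (e s : List Γ) : Prop :=
  ∃ parts : List (List Γ), s = parts.flatten ∧ ∀ p ∈ parts, ∃ x y, synEq L (x ++ p ++ y) e

/-- Glue a factorization `u₁ a₁ u₂ a₂ ⋯ u_k a_k` into a single finite word. -/
def glue : List (List Γ) → List (Set Γ × Γ) → List Γ
  | x :: xs, p :: l => x ++ p.2 :: glue xs l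
  | _, _ => []

/-- `(us, β)` is a factorization of `α` as `u₁ a₁ ⋯ u_k a_k β` with `uᵢ ∈ Aᵢ*`, `β ∈ B^∞`. -/
def IsFactorization (l : List (Set Γ × Γ)) (B : Set Γ) (us : List (List Γ)) (β : Word Γ)
    (α : Word Γ) : Prop :=
  us.length = l.length ∧
  (∀ (i : ℕ) (h1 : i < us.length) (h2 : i < l.length),
    ∀ c ∈ us.get ⟨i, h1⟩, c ∈ (l.get ⟨i, h2⟩).1) ∧
  β ∈ infin B ∧ α = wappend (glue us l) β

/-- The monomial `A₁* a₁ ⋯ A_k* a_k B^∞`. -/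
def monomial (l : List (Set Γ × Γ)) (B : Set Γ) : Set (Word Γ) :=
  {α | ∃ us β, IsFactorization l B us β α}

/-- The monomial given by `(l, B)` is unambiguous. -/
def Unambiguous (l : List (Set Γ × Γ)) (B : Set Γ) : Prop :=
  ∀ α us β us' β', IsFactorization l B us β α → IsFactorization l B us' β' α →
    us = us' ∧ β = β'

/-- `L` is a polynomial: a finite union of monomials. -/
def IsPolynomial (L : Set (Word Γ)) : Prop :=
  ∃ ms : List (List (Set Γ × Γ) × Set Γ), L = {α | ∃ m ∈ ms, α ∈ monomial m.1 m.2}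

/-- The set of marker letters of a monomial. -/
def sndSet (l : List (Set Γ × Γ)) : Set Γ := {a | ∃ p ∈ l, p.2 = a}

/-- `M_e`: the submonoid generated by the factors of the idempotent `e`. -/
def Msub {M : Type} [Monoid M] (e : M) : Submonoid M :=
  Submonoid.closure {t | ∃ x y, x * t * y = e}

/-- The variety `DA`: `ese = e` for all idempotents `e` and all `s ∈ M_e`. -/
def IsDA (M : Type) [Monoid M] : Prop :=
  ∀ e : M, e * e = e → ∀ s ∈ Msub e, e * s * e = e

end InfWords

/-!
Every word has a basic neighbourhood `u · cpx A` on which membership in `L` is constant, so `L`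
and its complement are open. For a finite word `u` take `A = ∅`. For an infinite word `α`, let `A`
be the set of letters occurring infinitely often in `α` and `u` a long enough prefix of `α`. By
Ramsey's theorem `α = u v₀ v₁ ⋯` with all `h vᵢ` equal to one idempotent `f`, and every
`γ = u β` with `β ∈ cpx A` factors likewise with an idempotent `g`. Every letter of `A` is a factor
of `f` and of `g`, so DA makes both absorb `h (A*)`: `f g f = f` and `g f g = g`. With `s = h u`,
`h B = f` and `h C = g`, the linked pairs `(s, f)`, `(s, g f)`, `(s g, g)` then join `α` to `γ`
through the ultimately periodic words `u (BCB)^ω` and `u (CBC)^ω`.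
-/

namespace InfWords

open Filter

variable {Γ M : Type}

def segment (G : ℕ → Γ) (a b : ℕ) : List Γ := (List.range' a (b - a)).map G

@[simp] lemma length_segment (G : ℕ → Γ) (a b : ℕ) : (segment G a b).length = b - a := by
  simp [segment]

@[simp] lemma getElem_segment (G : ℕ → Γ) (a b i : ℕ) (hi : i < (segment G a b).length) :
    (segment G a b)[i] = G (a + i) := by
  simp [segment]

lemma mem_segment {G : ℕ → Γ} {a b : ℕ} {x : Γ} :
    x ∈ segment G a b ↔ ∃ m, a ≤ m ∧ m < b ∧ G m = x := by
  simp only [segment, List.mem_map, List.mem_range'_1]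
  constructor
  · rintro ⟨m, ⟨h1, h2⟩, rfl⟩; exact ⟨m, h1, by omega, rfl⟩
  · rintro ⟨m, h1, h2, rfl⟩; exact ⟨m, ⟨h1, by omega⟩, rfl⟩

lemma segment_append_segment (G : ℕ → Γ) {a b c : ℕ} (hab : a ≤ b) (hbc : b ≤ c) :
    segment G a b ++ segment G b c = segment G a c := by
  obtain ⟨m, rfl⟩ := Nat.exists_eq_add_of_le hab
  obtain ⟨n, rfl⟩ := Nat.exists_eq_add_of_le hbc
  simp only [segment, ← List.map_append, Nat.add_sub_cancel_left, List.range'_append_1,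
    show a + m + n - a = m + n by omega]

lemma segment_ne_nil (G : ℕ → Γ) {a b : ℕ} (hab : a < b) : segment G a b ≠ [] :=
  List.ne_nil_of_length_pos (by simp; omega)

lemma mem_alph_of_mem_segment {G : ℕ → Γ} {a b : ℕ} {x : Γ} (hx : x ∈ segment G a b) :
    x ∈ alph (Sum.inr G) := by
  obtain ⟨m, -, -, rfl⟩ := mem_segment.1 hx
  exact ⟨m, rfl⟩

lemma isPre_segment_zero (G : ℕ → Γ) (m : ℕ) : IsPre (segment G 0 m) (Sum.inr G) := by
  intro i
  simp

lemma wappend_segment_zero (G : ℕ → Γ) (m : ℕ) :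
    wappend (segment G 0 m) (Sum.inr fun i => G (m + i)) = Sum.inr G := by
  simp only [wappend, Sum.inr.injEq]
  funext n
  split_ifs with hn
  · simp
  · simp only [length_segment, Nat.sub_zero] at hn ⊢
    congr 1; omega

section PairSets

variable {h : List Γ → M}

@[simp] lemma partialProd_zero (u : List Γ) (v : ℕ → List Γ) : partialProd u v 0 = u := by
  simp [partialProd]

lemma partialProd_succ (u : List Γ) (v : ℕ → List Γ) (n : ℕ) :
    partialProd u v (n + 1) = partialProd u v n ++ v n := by
  simp [partialProd, List.range_succ]

lemma mem_pairSet_of_strictMono (G : ℕ → Γ) {t : ℕ → ℕ} (ht : StrictMono t) {e : M}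
    (he : ∀ i, h (segment G (t i) (t (i + 1))) = e) :
    Sum.inr G ∈ pairSet h (h (segment G 0 (t 0))) e := by
  have hpp : ∀ n, partialProd (segment G 0 (t 0)) (fun i => segment G (t i) (t (i + 1))) n
      = segment G 0 (t n) := by
    intro n
    induction n with
    | zero => simp
    | succ n ih =>
      rw [partialProd_succ, ih, segment_append_segment G (Nat.zero_le _) (ht.monotone n.le_succ)]
  refine ⟨_, _, rfl, he, fun n => hpp n ▸ isPre_segment_zero G (t n), fun k => ⟨k + 1, ?_⟩⟩
  rw [hpp, length_segment]
  exact (Nat.lt_succ_self k).trans_le (ht.id_le _)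

lemma IsInfProd.wappend {u : List Γ} {v : ℕ → List Γ} {α : Word Γ} (hα : IsInfProd u v α)
    (w : List Γ) : IsInfProd (w ++ u) v (wappend w α) := by
  have hpp : ∀ n, partialProd (w ++ u) v n = w ++ partialProd u v n := by
    simp [partialProd]
  cases α with
  | inl l =>
    obtain ⟨hpre, n, hn⟩ := hα
    exact ⟨fun m => hpp m ▸ (List.prefix_append_right_inj w).2 (hpre m), n, by rw [hpp, hn]⟩
  | inr G =>
    obtain ⟨hpre, hlen⟩ := hα
    refine ⟨fun n ⟨i, hi'⟩ => ?_, fun k => ?_⟩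
    · simp only [hpp, List.get_eq_getElem]
      split_ifs with hi
      · exact List.getElem_append_left hi
      · rw [hpp, List.length_append] at hi'
        rw [List.getElem_append_right (by omega)]
        simpa using hpre n ⟨i - w.length, by omega⟩
    · obtain ⟨n, hn⟩ := hlen k
      exact ⟨n, by rw [hpp, List.length_append]; omega⟩

lemma mem_pairSet_wappend [Monoid M] (hhom : IsHom h) {s e : M} {α : Word Γ}
    (hα : α ∈ pairSet h s e) (w : List Γ) : wappend w α ∈ pairSet h (h w * s) e := by
  obtain ⟨u, v, rfl, hv, huv⟩ := hα
  exact ⟨w ++ u, v, hhom.map_mul w u, hv, huv.wappend w⟩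

lemma omegaPow_eq {z : List Γ} (hz : 0 < z.length) :
    omegaPow z = Sum.inr fun n => z[n % z.length]'(Nat.mod_lt n hz) := by
  cases z with
  | nil => simp at hz
  | cons a l => rfl

lemma omegaPow_append_mem_pairSet {z₁ z₂ : List Γ} (hz : z₁ ++ z₂ ≠ []) :
    omegaPow (z₁ ++ z₂) ∈ pairSet h (h z₁) (h (z₂ ++ z₁)) := by
  have hlen : 0 < (z₁ ++ z₂).length := List.length_pos_iff.mpr hz
  set L := (z₁ ++ z₂).length
  set ζ : ℕ → Γ := fun n => (z₁ ++ z₂)[n % L]'(Nat.mod_lt n hlen)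
  have hpre : segment ζ 0 z₁.length = z₁ := by
    refine List.ext_getElem (by simp) fun i hi _ => ?_
    have hiL : i < L := by simp [L] at hi ⊢; omega
    simp only [getElem_segment, zero_add, ζ, Nat.mod_eq_of_lt hiL]
    exact List.getElem_append_left _
  have hblock : ∀ n, segment ζ (z₁.length + n * L) (z₁.length + (n + 1) * L)
      = (z₁ ++ z₂).rotate z₁.length := by
    intro n
    refine List.ext_getElem ?_ fun i _ _ => ?_
    · simp only [length_segment, List.length_rotate, Nat.succ_mul]; omega
    · simp only [getElem_segment, List.getElem_rotate, ζ]
      congr 1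
      rw [show z₁.length + n * L + i = i + z₁.length + n * L by ring, Nat.add_mul_mod_self_right]
  have hmono : StrictMono fun n => z₁.length + n * L :=
    fun m n hmn => Nat.add_lt_add_left (Nat.mul_lt_mul_of_pos_right hmn hlen) _
  have := mem_pairSet_of_strictMono (h := h) ζ hmono fun n => congrArg h (hblock n)
  rwa [zero_mul, add_zero, hpre, List.rotate_append_length_eq, ← omegaPow_eq hlen] at this

end PairSets

lemma StronglyRecognizes.mem_iff_mem [Monoid M] {h : List Γ → M} {L : Set (Word Γ)}
    (hrec : StronglyRecognizes h L) {s e : M} (hse : LinkedPair s e) {α γ : Word Γ}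
    (hα : α ∈ pairSet h s e) (hγ : γ ∈ pairSet h s e) : α ∈ L ↔ γ ∈ L := by
  have hsub : ∀ {x y}, x ∈ pairSet h s e → y ∈ pairSet h s e → x ∈ L → y ∈ L := by
    intro x y hx hy hxL
    rw [hrec]
    exact Set.mem_iUnion.2 ⟨s, Set.mem_iUnion.2 ⟨e, Set.mem_iUnion.2 ⟨⟨hse, x, hx, hxL⟩, hy⟩⟩⟩
  exact ⟨hsub hα hγ, hsub hγ hα⟩

lemma _root_.Set.Infinite.exists_infinite_inter_fiber {α N : Type} [Finite N] {S : Set α}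
    (hS : S.Infinite) (c : α → N) : ∃ m, (S ∩ c ⁻¹' {m}).Infinite := by
  by_contra! H
  exact hS <| (Set.finite_iUnion H).subset fun x hx => Set.mem_iUnion.2 ⟨c x, hx, rfl⟩

theorem exists_strictMono_forall_lt_eq {N : Type} [Finite N] (c : ℕ → ℕ → N) :
    ∃ t : ℕ → ℕ, StrictMono t ∧ ∃ e, ∀ i j, i < j → c (t i) (t j) = e := by
  have hstep : ∀ S : {S : Set ℕ // S.Infinite}, ∃ (S' : {S : Set ℕ // S.Infinite}) (m : N),
      S'.1 ⊆ S.1 ∧ ∀ x ∈ S'.1, sInf S.1 < x ∧ c (sInf S.1) x = m := by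
    rintro ⟨S, hS⟩
    obtain ⟨m, hm⟩ :=
      (hS.sdiff (Set.finite_Iic (sInf S))).exists_infinite_inter_fiber (c (sInf S))
    exact ⟨⟨_, hm⟩, m, fun x hx => hx.1.1, fun x hx => ⟨not_le.1 hx.1.2, hx.2⟩⟩
  choose next col hsub hnext using hstep
  set seq : ℕ → {S : Set ℕ // S.Infinite} := fun n => next^[n] ⟨Set.univ, Set.infinite_univ⟩
  set a : ℕ → ℕ := fun n => sInf (seq n).1
  have hseq : ∀ n, seq (n + 1) = next (seq n) := fun n => Function.iterate_succ_apply' _ _ _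
  have hanti : Antitone fun n => (seq n).1 :=
    antitone_nat_of_succ_le fun n => hseq n ▸ hsub (seq n)
  have hlt : ∀ i j, i < j → a i < a j ∧ c (a i) (a j) = col (seq i) := fun i j hij =>
    hnext _ _ (hseq i ▸ hanti hij (Nat.sInf_mem (seq j).2.nonempty))
  have ha : StrictMono a := fun i j hij => (hlt i j hij).1
  obtain ⟨e, he⟩ := Finite.exists_infinite_fiber fun n => col (seq n)
  rw [Set.infinite_coe_iff] at he
  refine ⟨a ∘ Nat.nth (· ∈ (fun n => col (seq n)) ⁻¹' {e}), ha.comp (Nat.nth_strictMono he), e,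
    fun i j hij => ?_⟩
  exact (hlt _ _ (Nat.nth_strictMono he hij)).2.trans (Nat.nth_mem_of_infinite he i)

section Factorizations

variable [Monoid M] {h : List Γ → M}

theorem exists_idempotent_factorization [Finite M] (hhom : IsHom h) (G : ℕ → Γ) :
    ∃ (t : ℕ → ℕ) (f : M), StrictMono t ∧ f * f = f ∧
      ∀ i j, i < j → h (segment G (t i) (t j)) = f := by
  obtain ⟨t, ht, f, hf⟩ := exists_strictMono_forall_lt_eq fun i j => h (segment G i j)
  refine ⟨t, f, ht, ?_, hf⟩
  calc f * f = h (segment G (t 0) (t 1)) * h (segment G (t 1) (t 2)) := by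
        rw [hf 0 1 one_pos, hf 1 2 one_lt_two]
    _ = h (segment G (t 0) (t 2)) := by
        rw [← hhom.map_mul, segment_append_segment G (ht.monotone zero_le_one)
          (ht.monotone one_le_two)]
    _ = f := hf 0 2 two_pos

lemma IsHom.mem_of_forall_mem (hhom : IsHom h) {S : Submonoid M} {c : List Γ}
    (hc : ∀ a ∈ c, h [a] ∈ S) : h c ∈ S := by
  induction c with
  | nil => rw [hhom.map_one]; exact S.one_mem
  | cons a c ih =>
    rw [← List.singleton_append, hhom.map_mul]
    exact S.mul_mem (hc a List.mem_cons_self) (ih fun b hb => hc b (List.mem_cons_of_mem a hb))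

theorem exists_absorbing_idempotent_factorization [Finite M] (hDA : IsDA M) (hhom : IsHom h)
    (G : ℕ → Γ) :
    ∃ (t : ℕ → ℕ) (f : M), StrictMono t ∧ f * f = f ∧
      (∀ i j, i < j → h (segment G (t i) (t j)) = f) ∧
      ∀ c : List Γ, (∀ a ∈ c, a ∈ im (Sum.inr G)) → f * h c * f = f := by
  obtain ⟨t, f, ht, hff, hf⟩ := exists_idempotent_factorization hhom G
  refine ⟨t, f, ht, hff, hf, fun c hc => hDA f hff _ (hhom.mem_of_forall_mem fun a ha => ?_)⟩
  obtain ⟨m, hm, rfl⟩ := hc a ha (t 0)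
  have hmem : G m ∈ segment G (t 0) (t (m + 1)) :=
    mem_segment.2 ⟨m, hm, (Nat.lt_succ_self m).trans_le (ht.id_le _), rfl⟩
  obtain ⟨l₁, l₂, hl⟩ := List.append_of_mem hmem
  refine Submonoid.subset_closure ⟨h l₁, h l₂, ?_⟩
  rw [← hf 0 (m + 1) m.succ_pos, hl, ← hhom.map_mul, ← hhom.map_mul, List.append_assoc,
    List.singleton_append]

end Factorizations

lemma mem_im_inr_iff {F : ℕ → Γ} {a : Γ} : a ∈ im (Sum.inr F) ↔ ∃ᶠ m in atTop, F m = a :=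
  frequently_atTop.symm

lemma im_inr_nonempty [Finite Γ] (F : ℕ → Γ) : (im (Sum.inr F)).Nonempty := by
  obtain ⟨a, ha⟩ := Finite.exists_infinite_fiber F
  exact ⟨a, mem_im_inr_iff.2 (Nat.frequently_atTop_iff_infinite.2 (Set.infinite_coe_iff.1 ha))⟩

lemma eventually_mem_im [Finite Γ] (F : ℕ → Γ) : ∀ᶠ m in atTop, F m ∈ im (Sum.inr F) := by
  have : ∀ᶠ m in atTop, ∀ a, a ∉ im (Sum.inr F) → F m ≠ a := by
    refine eventually_all.2 fun a => ?_
    by_cases ha : a ∈ im (Sum.inr F)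
    · exact Eventually.of_forall fun _ h => absurd ha h
    · rw [mem_im_inr_iff, not_frequently] at ha
      exact ha.mono fun _ hm _ => hm
  filter_upwards [this] with m hm using by_contra fun hF => hm _ hF rfl

lemma im_inr_shift (F : ℕ → Γ) (p : ℕ) : im (Sum.inr fun i => F (p + i)) = im (Sum.inr F) := by
  ext a
  simp only [mem_im_inr_iff, add_comm p]
  conv_rhs => rw [← map_add_atTop_eq_nat p]
  rw [frequently_map]

lemma shift_mem_cpx_im {F : ℕ → Γ} {k p : ℕ} (hk : ∀ m ≥ k, F m ∈ im (Sum.inr F)) (hp : k ≤ p) :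
    Sum.inr (fun i => F (p + i)) ∈ cpx (im (Sum.inr F)) := by
  refine ⟨Set.Subset.antisymm ?_ fun a ha => ?_, im_inr_shift F p⟩
  · rintro _ ⟨i, rfl⟩
    exact hk _ (by omega)
  · obtain ⟨m, hm, rfl⟩ := ha p
    exact ⟨m - p, congrArg F (Nat.add_sub_cancel' hm)⟩

lemma exists_eq_inr_of_mem_cpx {A : Set Γ} (hA : A.Nonempty) {β : Word Γ} (hβ : β ∈ cpx A) :
    ∃ b, β = Sum.inr b := by
  cases β with
  | inl l =>
    obtain ⟨a, ha⟩ := hA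
    exact absurd (hβ.2.symm ▸ ha : a ∈ im (Sum.inl l)) (Set.notMem_empty a)
  | inr b => exact ⟨b, rfl⟩

section Transfer

variable [Monoid M] {h : List Γ → M} {L : Set (Word Γ)}

theorem mem_iff_of_inverse_idempotents (hhom : IsHom h) (hrec : StronglyRecognizes h L)
    {w B C : List Γ} (hB : B ≠ []) (hC : C ≠ []) (hBB : h B * h B = h B) (hCC : h C * h C = h C)
    (hBCB : h B * h C * h B = h B) (hCBC : h C * h B * h C = h C) (hwB : h w * h B = h w)
    {α γ : Word Γ} (hα : α ∈ pairSet h (h w) (h B)) (hγ : γ ∈ pairSet h (h w * h C) (h C)) :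
    α ∈ L ↔ γ ∈ L := by
  have hω : ∀ z₁ z₂ {s e}, z₁ ++ z₂ ≠ [] → h w * h z₁ = s → h (z₂ ++ z₁) = e →
      wappend w (omegaPow (z₁ ++ z₂)) ∈ pairSet h s e := by
    rintro z₁ z₂ s e hz rfl rfl
    exact mem_pairSet_wappend hhom (omegaPow_append_mem_pairSet hz) w
  set s := h w
  set f := h B
  set g := h C
  have hsgf : s * g * f = s := by
    conv_lhs => rw [← hwB]
    rw [mul_assoc s f, mul_assoc s (f * g), hBCB, hwB]
  have hθf : wappend w (omegaPow (B ++ (C ++ B))) ∈ pairSet h s f :=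
    hω [] (B ++ (C ++ B)) (by simp [hB]) (by rw [hhom.map_one, mul_one])
      (by rw [List.append_nil, hhom.map_mul, hhom.map_mul, ← mul_assoc, hBCB])
  have hθgf : wappend w (omegaPow (B ++ (C ++ B))) ∈ pairSet h s (g * f) :=
    hω B (C ++ B) (by simp [hB]) hwB
      (by rw [hhom.map_mul, hhom.map_mul, mul_assoc, hBB])
  have hθ'gf : wappend w (omegaPow (C ++ B ++ C)) ∈ pairSet h s (g * f) :=
    hω (C ++ B) C (by simp [hC]) (by rw [hhom.map_mul, ← mul_assoc, hsgf])
      (by rw [hhom.map_mul, hhom.map_mul, ← mul_assoc, hCC])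
  have hθ'g : wappend w (omegaPow (C ++ B ++ C)) ∈ pairSet h (s * g) g := by
    have := hω (C ++ B ++ C) [] (by simp [hC]) (s := s * g) (e := g)
      (by rw [hhom.map_mul, hhom.map_mul, ← mul_assoc, ← mul_assoc, hsgf])
      (by rw [List.nil_append, hhom.map_mul, hhom.map_mul, hCBC])
    rwa [List.append_nil] at this
  calc α ∈ L ↔ wappend w (omegaPow (B ++ (C ++ B))) ∈ L :=
        hrec.mem_iff_mem ⟨hwB, hBB⟩ hα hθf
    _ ↔ wappend w (omegaPow (C ++ B ++ C)) ∈ L :=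
        hrec.mem_iff_mem ⟨by rw [← mul_assoc, hsgf], by rw [← mul_assoc, hCBC]⟩ hθgf hθ'gf
    _ ↔ γ ∈ L := hrec.mem_iff_mem ⟨by rw [mul_assoc, hCC], hCC⟩ hθ'g hγ

lemma wappend_mem_pairSet_of_absorbing (hhom : IsHom h) {w : List Γ} {b : ℕ → Γ} {t : ℕ → ℕ}
    {f g : M} (ht : StrictMono t) (hg : ∀ i j, i < j → h (segment b (t i) (t j)) = g)
    (hwf : h w * f = h w) (hfb : ∀ c : List Γ, (∀ a ∈ c, a ∈ alph (Sum.inr b)) → f * h c * f = f)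
    (hgfg : g * f * g = g) :
    wappend w (Sum.inr b) ∈ pairSet h (h w * g) g := by
  have hb := mem_pairSet_of_strictMono b (h := h) (t := fun i => t (i + 1))
    (fun i j hij => ht (by omega)) fun i => hg _ _ (by omega)
  set x := h (segment b 0 (t 1)) with hx
  have hxf : f * x * f = f := hfb _ fun _ => mem_alph_of_mem_segment
  have hxg : x * f * g = x := by
    rw [hx, ← segment_append_segment b (Nat.zero_le _) (ht.monotone zero_le_one), hhom.map_mul,
      hg 0 1 one_pos, mul_assoc, mul_assoc, ← mul_assoc g, hgfg]
  have hwx : h w * x = h w * g := calc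
    h w * x = h w * f * (x * f * g) := by rw [hxg, hwf]
    _ = h w * (f * x * f) * g := by simp only [mul_assoc]
    _ = h w * g := by rw [hxf, hwf]
  exact hwx ▸ mem_pairSet_wappend hhom hb w

theorem exists_wappend_cpx_im_forall_mem_iff [Finite Γ] [Finite M] (hDA : IsDA M)
    (hhom : IsHom h) (hrec : StronglyRecognizes h L) (F : ℕ → Γ) :
    ∃ w, Sum.inr F ∈ wappend w '' cpx (im (Sum.inr F)) ∧
      ∀ β ∈ cpx (im (Sum.inr F)), (wappend w β ∈ L ↔ Sum.inr F ∈ L) := by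
  obtain ⟨k, hk⟩ := eventually_atTop.1 (eventually_mem_im F)
  obtain ⟨t, f, ht, hff, hf, hfA⟩ := exists_absorbing_idempotent_factorization hDA hhom F
  have hkt : k ≤ t (k + 1) := k.le_succ.trans (ht.id_le _)
  set w := segment F 0 (t (k + 1)) with hw
  set B := segment F (t (k + 1)) (t (k + 2))
  have hBA : ∀ a ∈ B, a ∈ im (Sum.inr F) := fun a ha => by
    obtain ⟨m, hm, -, rfl⟩ := mem_segment.1 ha
    exact hk m (hkt.trans hm)
  have hwf : h w * f = h w := by
    rw [hw, ← segment_append_segment F (Nat.zero_le _) (ht.monotone k.le_succ), hhom.map_mul,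
      hf k (k + 1) k.lt_succ_self, mul_assoc, hff]
  have hα : Sum.inr F ∈ pairSet h (h w) f :=
    mem_pairSet_of_strictMono F (t := fun i => t (k + 1 + i))
      (fun i j hij => ht (by omega)) fun i => hf _ _ (by omega)
  refine ⟨w, ⟨_, shift_mem_cpx_im hk hkt, wappend_segment_zero F _⟩, fun β hβ => ?_⟩
  obtain ⟨b, rfl⟩ := exists_eq_inr_of_mem_cpx (im_inr_nonempty F) hβ
  obtain ⟨t', g, ht', hgg, hg, hgA⟩ := exists_absorbing_idempotent_factorization hDA hhom b
  have hgfg : g * f * g = g := by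
    rw [← hf (k + 1) (k + 2) (by omega)]
    exact hgA B (hβ.2 ▸ hBA)
  have hfgf : f * g * f = f := by
    rw [← hg 0 1 one_pos]
    exact hfA _ fun _ => hβ.1 ▸ mem_alph_of_mem_segment
  have hγ := wappend_mem_pairSet_of_absorbing hhom (w := w) ht' hg hwf (hβ.1 ▸ hfA) hgfg
  rw [← hg 0 1 one_pos] at hγ hgg hgfg hfgf
  rw [← hf (k + 1) (k + 2) (by omega)] at hα hwf hff hgfg hfgf
  exact (mem_iff_of_inverse_idempotents hhom hrec (segment_ne_nil _ (ht (by omega)))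
    (segment_ne_nil _ (ht' one_pos)) hff hgg hfgf hgfg hwf hα hγ).symm

lemma cpx_empty : cpx (∅ : Set Γ) = {Sum.inl []} := by
  ext (l | f)
  · simp [cpx, alph, im, Set.eq_empty_iff_forall_notMem, List.eq_nil_iff_forall_not_mem]
  · simp [cpx, alph, Set.eq_empty_iff_forall_notMem]

theorem exists_wappend_cpx_forall_mem_iff [Finite Γ] [Finite M] (hDA : IsDA M)
    (hhom : IsHom h) (hrec : StronglyRecognizes h L) (α : Word Γ) :
    ∃ w A, α ∈ wappend w '' cpx A ∧ ∀ γ ∈ wappend w '' cpx A, (γ ∈ L ↔ α ∈ L) := by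
  cases α with
  | inl u => exact ⟨u, ∅, by simp [cpx_empty, wappend]⟩
  | inr F =>
    obtain ⟨w, hF, hL⟩ := exists_wappend_cpx_im_forall_mem_iff hDA hhom hrec F
    exact ⟨w, _, hF, by rintro _ ⟨β, hβ, rfl⟩; exact hL β hβ⟩

end Transfer

end InfWords

theorem da_strongly_recognized_clopen_strict_general (Γ : Type) [Fintype Γ] (M : Type)
    [Monoid M] [Finite M] (hDA : InfWords.IsDA M)
    (h : List Γ → M) (hhom : InfWords.IsHom h)
    (L : Set (InfWords.Word Γ)) (hrec : InfWords.StronglyRecognizes h L) :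
    @IsClopen _ (InfWords.strictTopo Γ) L := by
  let _ : TopologicalSpace (InfWords.Word Γ) := InfWords.strictTopo Γ
  have hL : IsLocallyConstant (· ∈ L) := (IsLocallyConstant.iff_exists_open _).2 fun α => by
    obtain ⟨w, A, hα, hγ⟩ := InfWords.exists_wappend_cpx_forall_mem_iff hDA hhom hrec α
    exact ⟨_, TopologicalSpace.isOpen_generateFrom_of_mem ⟨w, A, rfl⟩, hα,
      fun γ hγA => propext (hγ γ hγA)⟩
  simpa using hL.isClopen_fiber True

theorem da_strongly_recognized_clopen_strict (Γ : Type) [Fintype Γ] (M : Type)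
    [Monoid M] [Finite M] (hDA : InfWords.IsDA M)
    (h : List Γ → M) (hhom : InfWords.IsHom h) (hsurj : Function.Surjective h)
    (L : Set (InfWords.Word Γ)) (hrec : InfWords.StronglyRecognizes h L) :
    @IsClopen _ (InfWords.strictTopo Γ) L :=
  da_strongly_recognized_clopen_strict_general Γ M hDA h hhom L hrec
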